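/- Let p₁, …, p_m be points in convex position in counterclockwise order and let S be a multiset of segments on these points. Suppose segment p_a p_b (a < b) has minimum positive crossing depth among segments of S that have crossings, where the crossing depth δ×(p_a p_b) is the number of points strictly between p_a and p_b (indices a+1,…,b−1) that are endpoints of some segment of S involved in a crossing. Let q be the ⌈δ×(p_a p_b)/2⌉-th such point. Then q is the endpoint of a segment of S that crosses p_a p_b. -/

import Mathlib

abbrev Plane := EuclideanSpace ℝ (Fin 2)

/-- Two segments cross: they intersect in exactly one point, which is interior to both. -/
def SegCross (a b c d : Plane) : Prop :=
  ∃ x, segment ℝ a b ∩ segment ℝ c d = {x} ∧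
    x ∈ openSegment ℝ a b ∧ x ∈ openSegment ℝ c d

/-- Orientation determinant of two vectors of the plane. -/
def det2 (u v : Plane) : ℝ := u 0 * v 1 - u 1 * v 0

/-- A segment of `S` (given by its index pair) has crossings in `S`. -/
def HasCrossings {m : ℕ} (p : Fin m → Plane) (S : Multiset (Fin m × Fin m))
    (s : Fin m × Fin m) : Prop :=
  ∃ s' ∈ S, SegCross (p s.1) (p s.2) (p s'.1) (p s'.2)

/-- The set of indices strictly between `a` and `b` that are endpoints of a segment
of `S` with crossings. -/
def crossDepthSet {m : ℕ} (p : Fin m → Plane) (S : Multiset (Fin m × Fin m))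
    (a b : Fin m) : Set (Fin m) :=
  {i | a < i ∧ i < b ∧ ∃ s ∈ S, (s.1 = i ∨ s.2 = i) ∧ HasCrossings p S s}

/-- The crossing depth of the segment with index pair `(a, b)`. -/
noncomputable def crossDepth {m : ℕ} (p : Fin m → Plane) (S : Multiset (Fin m × Fin m))
    (a b : Fin m) : ℕ :=
  (crossDepthSet p S a b).ncard

/-! The segment `p_q p_c` of `S` through the median point `q` must leave the range `[a, b]`:
otherwise all the points counted by its own crossing depth lie on one side of `q`, and by
the choice of `q` each side holds fewer than `δ×(p_a p_b)` of them, contradicting minimality.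
An endpoint `c` outside `[a, b]` interleaves `{q, c}` with `{a, b}` along the convex
polygon, so the two chords cross. -/

open AffineMap

lemma det2_lineMap_sub (v P A C : Plane) (t : ℝ) :
    det2 v (lineMap A C t - P) = (1 - t) * det2 v (A - P) + t * det2 v (C - P) := by
  simp only [lineMap_apply_module, det2, PiLp.sub_apply, PiLp.add_apply, PiLp.smul_apply,
    smul_eq_mul]
  ring

lemma det2_sub_eq_zero_of_mem_segment {A B y : Plane} (hy : y ∈ segment ℝ A B) :
    det2 (B - A) (y - A) = 0 := by
  rw [segment_eq_image_lineMap] at hy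
  obtain ⟨t, -, rfl⟩ := hy
  rw [det2_lineMap_sub]
  simp only [det2, PiLp.sub_apply]
  ring

lemma exists_smul_eq_of_det2_eq_zero {v w : Plane} (hv : v ≠ 0) (h : det2 v w = 0) :
    ∃ u : ℝ, u • v = w := by
  have hv' : v 0 ≠ 0 ∨ v 1 ≠ 0 := by
    by_contra! h0
    exact hv (by ext i; fin_cases i <;> simp [h0.1, h0.2])
  unfold det2 at h
  rcases hv' with h0 | h1
  · refine ⟨w 0 / v 0, ?_⟩
    ext i; fin_cases i <;> simp <;> field_simp; linarith
  · refine ⟨w 1 / v 1, ?_⟩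
    ext i; fin_cases i <;> simp <;> field_simp; linarith

lemma exists_lineMap_eq_of_det2_eq_zero {A B x : Plane} (hAB : A ≠ B)
    (h : det2 (B - A) (x - A) = 0) : ∃ u : ℝ, lineMap A B u = x := by
  obtain ⟨u, hu⟩ := exists_smul_eq_of_det2_eq_zero (sub_ne_zero.2 hAB.symm) h
  exact ⟨u, by rw [lineMap_apply_module', hu, sub_add_cancel]⟩

lemma exists_mem_Ioo_det2_lineMap_sub_eq_zero_iff {v P A C : Plane}
    (hA : 0 < det2 v (A - P)) (hC : det2 v (C - P) < 0) :
    ∃ t ∈ Set.Ioo (0 : ℝ) 1, ∀ s : ℝ, det2 v (lineMap A C s - P) = 0 ↔ s = t := by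
  have hden : 0 < det2 v (A - P) - det2 v (C - P) := by linarith
  refine ⟨det2 v (A - P) / (det2 v (A - P) - det2 v (C - P)),
    ⟨div_pos hA hden, (div_lt_one hden).2 (by linarith)⟩, fun s => ?_⟩
  rw [det2_lineMap_sub, eq_div_iff hden.ne']
  constructor <;> intro h <;> linarith

/-- `det2 (D - B) (X - B)` is the signed side of `X` with respect to the line `BD`. -/
lemma segCross_of_det2 {A B C D : Plane}
    (hA : 0 < det2 (D - B) (A - B)) (hC : det2 (D - B) (C - B) < 0)
    (hB : 0 < det2 (A - C) (B - C)) (hD : det2 (A - C) (D - C) < 0) :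
    SegCross B D A C := by
  obtain ⟨t, ht, hBD_iff⟩ := exists_mem_Ioo_det2_lineMap_sub_eq_zero_iff hA hC
  obtain ⟨u, hu, hAC_iff⟩ := exists_mem_Ioo_det2_lineMap_sub_eq_zero_iff hB hD
  have hx_seg : lineMap A C t ∈ segment ℝ C A := by
    rw [segment_symm, segment_eq_image_lineMap]
    exact ⟨t, Set.Ioo_subset_Icc_self ht, rfl⟩
  have hBD : B ≠ D := by
    rintro rfl
    simp only [sub_self, det2, PiLp.zero_apply, zero_mul] at hA
    exact lt_irrefl 0 hA
  have hx_eq : lineMap B D u = lineMap A C t := by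
    obtain ⟨w, hw⟩ := exists_lineMap_eq_of_det2_eq_zero hBD ((hBD_iff t).2 rfl)
    rw [← hw, ← (hAC_iff w).1 (hw ▸ det2_sub_eq_zero_of_mem_segment hx_seg)]
  refine ⟨lineMap A C t, Set.eq_singleton_iff_unique_mem.2 ⟨⟨?_, ?_⟩, ?_⟩, ?_, ?_⟩
  · rw [← hx_eq, segment_eq_image_lineMap]
    exact ⟨u, Set.Ioo_subset_Icc_self hu, rfl⟩
  · rwa [segment_symm]
  · rintro y ⟨hy_BD, hy_AC⟩
    rw [segment_eq_image_lineMap] at hy_AC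
    obtain ⟨s, -, rfl⟩ := hy_AC
    rw [(hBD_iff s).1 (det2_sub_eq_zero_of_mem_segment hy_BD)]
  · rw [← hx_eq, openSegment_eq_image_lineMap]
    exact ⟨u, hu, rfl⟩
  · rw [openSegment_eq_image_lineMap]
    exact ⟨t, ht, rfl⟩

lemma SegCross.symm {A B C D : Plane} (h : SegCross A B C D) : SegCross C D A B := by
  obtain ⟨x, hx, hAB, hCD⟩ := h
  exact ⟨x, by rwa [Set.inter_comm], hCD, hAB⟩

lemma SegCross.swap_left {A B C D : Plane} (h : SegCross A B C D) : SegCross B A C D := by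
  obtain ⟨x, hx, hAB, hCD⟩ := h
  exact ⟨x, by rwa [segment_symm], by rwa [openSegment_symm], hCD⟩

lemma segCross_of_ccw {ι : Type*} [Preorder ι] {p : ι → Plane}
    (hccw : ∀ i j k : ι, i < j → j < k → 0 < det2 (p j - p i) (p k - p i))
    {i j k l : ι} (hij : i < j) (hjk : j < k) (hkl : k < l) :
    SegCross (p j) (p l) (p i) (p k) := by
  have hijk := hccw i j k hij hjk
  have hijl := hccw i j l hij (hjk.trans hkl)
  have hikl := hccw i k l (hij.trans hjk) hkl
  have hjkl := hccw j k l hjk hkl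
  simp only [det2, PiLp.sub_apply] at hijk hijl hikl hjkl
  apply segCross_of_det2 <;> simp only [det2, PiLp.sub_apply] <;> linarith

lemma ncard_sep_lt_add_ncard_sep_gt {α : Type*} [LinearOrder α] {D : Set α} (hD : D.Finite)
    {q : α} (hq : q ∈ D) :
    {r ∈ D | r < q}.ncard + {r ∈ D | q < r}.ncard + 1 = D.ncard := by
  have hdiff : D \ Set.Iio q = insert q {r ∈ D | q < r} := by
    ext r
    simp only [Set.mem_sdiff, Set.mem_Iio, not_lt, Set.mem_insert_iff, Set.mem_ofPred_eq]
    constructor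
    · rintro ⟨hr, hqr⟩
      rcases hqr.eq_or_lt with rfl | hqr
      exacts [Or.inl rfl, Or.inr ⟨hr, hqr⟩]
    · rintro (rfl | ⟨hr, hqr⟩)
      exacts [⟨hq, le_rfl⟩, ⟨hr, hqr.le⟩]
  have hq_notMem : q ∉ {r ∈ D | q < r} := fun h => lt_irrefl q h.2
  rw [← Set.ncard_inter_add_ncard_sdiff_eq_ncard D (Set.Iio q) hD, hdiff,
    Set.ncard_insert_of_notMem hq_notMem (hD.subset fun r hr => hr.1)]
  rfl

section crossDepth

variable {m : ℕ} (p : Fin m → Plane) (S : Multiset (Fin m × Fin m)) {a b a' b' : Fin m}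

lemma crossDepth_le_ncard_sep_gt (ha : a ≤ a') (hb : b' ≤ b) :
    crossDepth p S a' b' ≤ {r ∈ crossDepthSet p S a b | a' < r}.ncard :=
  Set.ncard_le_ncard (fun _ ⟨h₁, h₂, h₃⟩ => ⟨⟨ha.trans_lt h₁, h₂.trans_le hb, h₃⟩, h₁⟩)
    (Set.toFinite _)

lemma crossDepth_le_ncard_sep_lt (ha : a ≤ a') (hb : b' ≤ b) :
    crossDepth p S a' b' ≤ {r ∈ crossDepthSet p S a b | r < b'}.ncard :=
  Set.ncard_le_ncard (fun _ ⟨h₁, h₂, h₃⟩ => ⟨⟨ha.trans_lt h₁, h₂.trans_le hb, h₃⟩, h₂⟩)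
    (Set.toFinite _)

end crossDepth

theorem median_point_crosses_min_depth_segment_general {m : ℕ} (p : Fin m → Plane)
    (hccw : ∀ i j k : Fin m, i < j → j < k →
      0 < det2 (p j - p i) (p k - p i))
    (S : Multiset (Fin m × Fin m))
    (a b : Fin m)
    (hmin : ∀ s ∈ S, HasCrossings p S s → crossDepth p S a b ≤ crossDepth p S s.1 s.2)
    (q : Fin m) (hq : q ∈ crossDepthSet p S a b)
    (hqrank : {r ∈ crossDepthSet p S a b | r < q}.ncard =
      (crossDepth p S a b + 1) / 2 - 1) :
    ∃ c : Fin m, ((q, c) ∈ S ∨ (c, q) ∈ S) ∧ SegCross (p q) (p c) (p a) (p b) := by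
  have hsplit : _ + _ + 1 = crossDepth p S a b :=
    ncard_sep_lt_add_ncard_sep_gt (Set.toFinite _) hq
  obtain ⟨haq, hqb, s, hsS, rfl | rfl, hscross⟩ := hq
  · have hbc : b < s.2 := by
      by_contra! hcb
      have := crossDepth_le_ncard_sep_gt p S haq.le hcb
      have := hmin s hsS hscross
      omega
    exact ⟨s.2, Or.inl hsS, segCross_of_ccw hccw haq hqb hbc⟩
  · have hca : s.1 < a := by
      by_contra! hac
      have := crossDepth_le_ncard_sep_lt p S hac hqb.le
      have := hmin s hsS hscross
      omega
    exact ⟨s.1, Or.inr hsS, (segCross_of_ccw hccw hca haq hqb).symm.swap_left⟩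

theorem median_point_crosses_min_depth_segment {m : ℕ} (p : Fin m → Plane)
    (hccw : ∀ i j k : Fin m, i < j → j < k →
      0 < det2 (p j - p i) (p k - p i))
    (S : Multiset (Fin m × Fin m)) (hord : ∀ s ∈ S, s.1 < s.2)
    (a b : Fin m) (hab : a < b) (habS : (a, b) ∈ S)
    (habcross : HasCrossings p S (a, b))
    (hmin : ∀ s ∈ S, HasCrossings p S s → crossDepth p S a b ≤ crossDepth p S s.1 s.2)
    (q : Fin m) (hq : q ∈ crossDepthSet p S a b)
    (hqrank : {r ∈ crossDepthSet p S a b | r < q}.ncard =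
      (crossDepth p S a b + 1) / 2 - 1) :
    ∃ c : Fin m, ((q, c) ∈ S ∨ (c, q) ∈ S) ∧ SegCross (p q) (p c) (p a) (p b) :=
  median_point_crosses_min_depth_segment_general p hccw S a b hmin q hq hqrank
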